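/- Let k₁, k₂ ≥ 1, ℓ ≥ 1, ρ ∈ ℤ, and consider R = ℤ[x,y]/⟨x^{ℓ+1}, y^{k₂}(y+ρx)^{k₁}⟩ with deg x = deg y = 2. Then R is a free ℤ-module of rank (ℓ+1)·(k₁+k₂), with basis the monomials x^i·y^j for 0 ≤ i ≤ ℓ and 0 ≤ j ≤ k₁+k₂−1. -/

import Mathlib

open MvPolynomial

/-- The cohomology ring `ℤ[x,y]/⟨x^{ℓ+1}, y^{k₂}(y+ρx)^{k₁}⟩` of the projectivized
bundle `S^{2ℓ+1} ×_{S¹} P(ℂ_ρ^{k₁} ⊕ ℂ^{k₂})`. -/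
noncomputable def projBundleRing (ℓ k₁ k₂ : ℕ) (ρ : ℤ) :=
  MvPolynomial (Fin 2) ℤ ⧸
    Ideal.span {(X 0 : MvPolynomial (Fin 2) ℤ) ^ (ℓ + 1), X 1 ^ k₂ * (X 1 + C ρ * X 0) ^ k₁}

noncomputable instance (ℓ k₁ k₂ : ℕ) (ρ : ℤ) : CommRing (projBundleRing ℓ k₁ k₂ ρ) :=
  Ideal.Quotient.commRing _

/-!
`R[x,y]/⟨f(x), G(x,y)⟩` is the tower `(R[x]/f)[y]/g`, where `g` is `G` with `x` specialised to
the root of `f`. When `f` and `g` are monic, both steps are free with power bases, so the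
products `x^i y^j` (`i < deg f`, `j < deg g`) form an `R`-basis. For the ring of the theorem,
`f = x^{ℓ+1}` and `g = y^{k₂}(y+ρx)^{k₁}` is monic of degree `k₁+k₂` in `y`.
-/

open scoped Polynomial

noncomputable section

lemma AdjoinRoot.powerBasisAux'_apply {R : Type*} [CommRing R] {g : R[X]} (hg : g.Monic)
    (i : Fin g.natDegree) : AdjoinRoot.powerBasisAux' hg i = AdjoinRoot.root g ^ (i : ℕ) :=
  (AdjoinRoot.powerBasis' hg).basis_eq_pow i

namespace AdjoinRootTower

variable {R : Type*} [CommRing R] (f : R[X]) (G : MvPolynomial (Fin 2) R)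

def substRoot : MvPolynomial (Fin 2) R →ₐ[R] (AdjoinRoot f)[X] :=
  aeval ![Polynomial.C (AdjoinRoot.root f), Polynomial.X]

@[simp] lemma substRoot_X_zero : substRoot f (X 0) = Polynomial.C (AdjoinRoot.root f) := by
  simp [substRoot]

@[simp] lemma substRoot_X_one : substRoot f (X 1) = Polynomial.X := by
  simp [substRoot]

lemma substRoot_aeval_X_zero (p : R[X]) :
    substRoot f (Polynomial.aeval (X 0) p) = Polynomial.C (AdjoinRoot.mk f p) := by
  rw [← Polynomial.aeval_algHom_apply, substRoot_X_zero, ← AdjoinRoot.aeval_eq]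
  exact Polynomial.aeval_algHom_apply Polynomial.CAlgHom _ _

abbrev BivariateQuotient : Type _ :=
  MvPolynomial (Fin 2) R ⧸ Ideal.span {Polynomial.aeval (X 0) f, G}

def toAdjoinRoot : BivariateQuotient f G →ₐ[R] AdjoinRoot (substRoot f G) :=
  Ideal.Quotient.liftₐ _ (((AdjoinRoot.mkₐ _).restrictScalars R).comp (substRoot f)) <| by
    intro a ha
    rw [← RingHom.mem_ker]
    refine (Ideal.span_le.mpr ?_) ha
    rintro _ (rfl | rfl) <;> simp [substRoot_aeval_X_zero, AdjoinRoot.mk_self]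

@[simp] lemma toAdjoinRoot_mk (P : MvPolynomial (Fin 2) R) :
    toAdjoinRoot f G (Ideal.Quotient.mk _ P) = AdjoinRoot.mk _ (substRoot f P) := rfl

def ofAdjoinRootBase : AdjoinRoot f →ₐ[R] BivariateQuotient f G :=
  AdjoinRoot.liftAlgHom f (Algebra.ofId R _) (Ideal.Quotient.mk _ (X 0)) <| by
    change Polynomial.aeval (Ideal.Quotient.mkₐ R _ (X 0)) f = 0
    rw [Polynomial.aeval_algHom_apply, Ideal.Quotient.mkₐ_eq_mk, Ideal.Quotient.eq_zero_iff_mem]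
    exact Ideal.subset_span (.inl rfl)

lemma eval₂_substRoot (P : MvPolynomial (Fin 2) R) :
    (substRoot f P).eval₂ (ofAdjoinRootBase f G : AdjoinRoot f →+* BivariateQuotient f G)
      (Ideal.Quotient.mk _ (X 1)) = Ideal.Quotient.mk _ P := by
  induction P using MvPolynomial.induction_on with
  | C r => simp [substRoot, ofAdjoinRootBase]; rfl
  | add p q hp hq => simp_all
  | mul_X p i hp => fin_cases i <;> simp_all [ofAdjoinRootBase]

def ofAdjoinRoot : AdjoinRoot (substRoot f G) →ₐ[R] BivariateQuotient f G :=
  AdjoinRoot.liftAlgHom _ (ofAdjoinRootBase f G) (Ideal.Quotient.mk _ (X 1)) <| by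
    rw [eval₂_substRoot, Ideal.Quotient.eq_zero_iff_mem]
    exact Ideal.subset_span (.inr rfl)

def equivAdjoinRoot : BivariateQuotient f G ≃ₐ[R] AdjoinRoot (substRoot f G) :=
  AlgEquiv.ofAlgHom (toAdjoinRoot f G) (ofAdjoinRoot f G)
    (by
      ext
      · simp [ofAdjoinRoot, ofAdjoinRootBase]
      · simp [ofAdjoinRoot])
    (by
      apply Ideal.Quotient.algHom_ext R
      ext i
      fin_cases i <;> simp [ofAdjoinRoot, ofAdjoinRootBase])

@[simp] lemma equivAdjoinRoot_symm_apply (x : AdjoinRoot (substRoot f G)) :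
    (equivAdjoinRoot f G).symm x = ofAdjoinRoot f G x := rfl

variable {f G}

def monomialBasis (hf : f.Monic) (hG : (substRoot f G).Monic) :
    Module.Basis (Fin f.natDegree × Fin (substRoot f G).natDegree) R
      (BivariateQuotient f G) :=
  ((AdjoinRoot.powerBasisAux' hf).smulTower (AdjoinRoot.powerBasisAux' hG)).map
    (equivAdjoinRoot f G).symm.toLinearEquiv

lemma monomialBasis_apply (hf : f.Monic) (hG : (substRoot f G).Monic)
    (p : Fin f.natDegree × Fin (substRoot f G).natDegree) :
    monomialBasis hf hG p = Ideal.Quotient.mk _ (X 0 ^ (p.1 : ℕ) * X 1 ^ (p.2 : ℕ)) := by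
  rw [monomialBasis, Module.Basis.map_apply, Module.Basis.smulTower_apply,
    AdjoinRoot.powerBasisAux'_apply, AdjoinRoot.powerBasisAux'_apply,
    AlgEquiv.toLinearEquiv_apply, equivAdjoinRoot_symm_apply, Algebra.smul_def]
  simp [ofAdjoinRoot, ofAdjoinRootBase]

lemma substRoot_X_one_pow_mul_pow (k₁ k₂ : ℕ) (r : R) :
    substRoot f (X 1 ^ k₂ * (X 1 + C r * X 0) ^ k₁) =
      Polynomial.X ^ k₂ *
        (Polynomial.X + Polynomial.C (AdjoinRoot.of f r * AdjoinRoot.root f)) ^ k₁ := by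
  simp [AdjoinRoot.algebraMap_eq]

end AdjoinRootTower

end

theorem stmt9_general (ℓ k₁ k₂ : ℕ) (ρ : ℤ) :
    ∃ b : Module.Basis (Fin (ℓ + 1) × Fin (k₁ + k₂)) ℤ (projBundleRing ℓ k₁ k₂ ρ),
      ∀ p : Fin (ℓ + 1) × Fin (k₁ + k₂),
        b p = Ideal.Quotient.mk _ (X 0 ^ (p.1 : ℕ) * X 1 ^ (p.2 : ℕ)) := by
  set f : ℤ[X] := Polynomial.X ^ (ℓ + 1)
  set G : MvPolynomial (Fin 2) ℤ := X 1 ^ k₂ * (X 1 + C ρ * X 0) ^ k₁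
  have : Nontrivial (AdjoinRoot f) :=
    AdjoinRoot.nontrivial f (by rw [Polynomial.degree_X_pow]; exact_mod_cast ℓ.succ_ne_zero)
  have hf : f.Monic := Polynomial.monic_X_pow _
  have hfactor := (Polynomial.monic_X_add_C (AdjoinRoot.of f ρ * AdjoinRoot.root f)).pow k₁
  have hG : (AdjoinRootTower.substRoot f G).Monic := by
    rw [AdjoinRootTower.substRoot_X_one_pow_mul_pow]
    exact (Polynomial.monic_X_pow k₂).mul hfactor
  have hdf : f.natDegree = ℓ + 1 := Polynomial.natDegree_X_pow _
  have hdG : (AdjoinRootTower.substRoot f G).natDegree = k₁ + k₂ := by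
    rw [AdjoinRootTower.substRoot_X_one_pow_mul_pow, Polynomial.natDegree_X_pow_mul k₂
      hfactor.ne_zero, Polynomial.natDegree_pow_X_add_C, add_comm]
  have hI : Ideal.span {Polynomial.aeval (X 0) f, G} = Ideal.span {X 0 ^ (ℓ + 1), G} := by
    simp [f]
  refine ⟨((AdjoinRootTower.monomialBasis hf hG).reindex
    ((finCongr hdf).prodCongr (finCongr hdG))).map
      (Ideal.quotEquivOfEq hI).toAddEquiv.toIntLinearEquiv, fun p => ?_⟩
  -- `projBundleRing` has the quotient's `ℤ`-module structure only up to unfolding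
  erw [Module.Basis.map_apply, Module.Basis.reindex_apply, AdjoinRootTower.monomialBasis_apply]
  exact Ideal.quotEquivOfEq_mk hI _

theorem stmt9 (ℓ k₁ k₂ : ℕ) (hℓ : 1 ≤ ℓ) (hk₁ : 1 ≤ k₁) (hk₂ : 1 ≤ k₂) (ρ : ℤ) :
    ∃ b : Module.Basis (Fin (ℓ + 1) × Fin (k₁ + k₂)) ℤ (projBundleRing ℓ k₁ k₂ ρ),
      ∀ p : Fin (ℓ + 1) × Fin (k₁ + k₂),
        b p = Ideal.Quotient.mk _ (X 0 ^ (p.1 : ℕ) * X 1 ^ (p.2 : ℕ)) :=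
  stmt9_general ℓ k₁ k₂ ρ
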